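/- Let A be a symmetric real n×n matrix (n ≥ 2) with a nonzero kernel vector, and let a > 0 be a real number such that trace(A²) = a · trace(A). Then 0 ≤ trace(A) ≤ (n − 1) · a. Moreover, if trace(A) = 0 then A = 0, and if trace(A) = (n−1)a then A restricted to the orthogonal complement of the kernel vector equals a times the identity (equivalently, A² = a·A and A has rank n−1 or 0 accordingly). -/

import Mathlib

/-!
The eigenvalues `λᵢ` of `A` are real, one of them, `λᵢ₀`, vanishes because `A` has a kernel,
and `∑ λᵢ² = a ∑ λᵢ`. Over the other `n - 1` eigenvalues this identity turns into
`∑ (λᵢ - a)² = a ((n - 1) a - ∑ λᵢ)`, while `a ∑ λᵢ = ∑ λᵢ² ≥ 0`; hence `0 ≤ tr A ≤ (n - 1) a`.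
At the lower endpoint all `λᵢ` vanish, at the upper one every `λᵢ` with `i ≠ i₀` equals `a`.
-/

open Finset Matrix

namespace Finset
variable {ι : Type*} (s : Finset ι) {x : ι → ℝ} {a : ℝ}

theorem sum_sub_sq_eq_of_sum_sq_eq (h : ∑ i ∈ s, x i ^ 2 = a * ∑ i ∈ s, x i) :
    ∑ i ∈ s, (x i - a) ^ 2 = a * (#s * a - ∑ i ∈ s, x i) := by
  simp only [sub_sq, sum_add_distrib, sum_sub_distrib, h, ← sum_mul, ← mul_sum, sum_const,
    nsmul_eq_mul]
  ring

variable (h : ∑ i ∈ s, x i ^ 2 = a * ∑ i ∈ s, x i)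
include h

theorem sum_nonneg_of_sum_sq_eq (ha : 0 < a) : 0 ≤ ∑ i ∈ s, x i := by
  refine nonneg_of_mul_nonneg_right ?_ ha
  rw [← h]
  exact sum_nonneg fun i _ ↦ sq_nonneg (x i)

theorem sum_le_card_mul_of_sum_sq_eq (ha : 0 < a) : ∑ i ∈ s, x i ≤ #s * a := by
  have := nonneg_of_mul_nonneg_right
    (s.sum_sub_sq_eq_of_sum_sq_eq h ▸ sum_nonneg fun i _ ↦ sq_nonneg (x i - a)) ha
  linarith

theorem eq_zero_of_sum_eq_zero_of_sum_sq_eq (h0 : ∑ i ∈ s, x i = 0) : ∀ i ∈ s, x i = 0 := by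
  rw [← sum_mul_self_eq_zero_iff]
  simpa [← sq, h0] using h

theorem eq_of_sum_eq_card_mul_of_sum_sq_eq (heq : ∑ i ∈ s, x i = #s * a) :
    ∀ i ∈ s, x i = a := by
  have hzero := s.sum_sub_sq_eq_of_sum_sq_eq h
  rw [heq, sub_self, mul_zero] at hzero
  intro i hi
  exact sub_eq_zero.mp <| ((sum_mul_self_eq_zero_iff s fun i ↦ x i - a).mp
    (by simpa [← sq] using hzero)) i hi

end Finset

namespace Matrix.IsHermitian
variable {𝕜 n : Type*} [RCLike 𝕜] [Fintype n] [DecidableEq n] {A : Matrix n n 𝕜}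
  (hA : A.IsHermitian)
include hA

theorem trace_mul_self : (A * A).trace = ∑ i, ((hA.eigenvalues i ^ 2 : ℝ) : 𝕜) := by
  conv_lhs => rw [hA.spectral_theorem, ← map_mul, Unitary.conjStarAlgAut_apply, trace_mul_cycle,
    Unitary.coe_star_mul_self, one_mul, diagonal_mul_diagonal, trace_diagonal]
  simp [sq]

theorem mul_self_eq_smul {c : ℝ} (h : ∀ i, hA.eigenvalues i = 0 ∨ hA.eigenvalues i = c) :
    A * A = c • A := by
  have hD : diagonal (RCLike.ofReal (K := 𝕜) ∘ hA.eigenvalues) *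
      diagonal (RCLike.ofReal ∘ hA.eigenvalues) =
      (c : 𝕜) • diagonal (RCLike.ofReal ∘ hA.eigenvalues) := by
    rw [diagonal_mul_diagonal, ← diagonal_smul]
    congr 1
    funext i
    rcases h i with h | h <;> simp [h]
  rw [RCLike.real_smul_eq_coe_smul (K := 𝕜)]
  conv_lhs => rw [hA.spectral_theorem, ← map_mul, hD, map_smul, ← hA.spectral_theorem]

theorem exists_eigenvalues_eq_zero {v : n → 𝕜} (hv : v ≠ 0) (hAv : A *ᵥ v = 0) :
    ∃ i, hA.eigenvalues i = 0 := by
  have hdet : A.det = 0 := exists_mulVec_eq_zero_iff.mp ⟨v, hv, hAv⟩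
  simpa [hA.det_eq_prod_eigenvalues, prod_eq_zero_iff] using hdet

theorem rank_eq_card_sub_one {i₀ : n} (h₀ : hA.eigenvalues i₀ = 0)
    (h : ∀ i ≠ i₀, hA.eigenvalues i ≠ 0) : A.rank = Fintype.card n - 1 := by
  have hiff (i : n) : hA.eigenvalues i ≠ 0 ↔ i ≠ i₀ :=
    ⟨fun hi hii₀ ↦ hi (hii₀ ▸ h₀), h i⟩
  simp [hA.rank_eq_card_non_zero_eigs, hiff, Fintype.card_subtype_compl]

end Matrix.IsHermitian

theorem stmt_3_general {n : ℕ} (A : Matrix (Fin n) (Fin n) ℝ)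
    (hA : A.IsSymm) (v : Fin n → ℝ) (hv : v ≠ 0) (hAv : A.mulVec v = 0)
    (a : ℝ) (ha : 0 < a) (htr : (A * A).trace = a * A.trace) :
    0 ≤ A.trace ∧ A.trace ≤ ((n : ℝ) - 1) * a ∧
    (A.trace = 0 → A = 0) ∧
    (A.trace = ((n : ℝ) - 1) * a → A * A = a • A ∧ A.rank = n - 1) := by
  have hH : A.IsHermitian := isHermitian_iff_isSymm.mpr hA
  obtain ⟨i₀, hi₀⟩ := hH.exists_eigenvalues_eq_zero hv hAv
  set s := univ.erase i₀
  have hcard : (#s : ℝ) = n - 1 := by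
    simp [s, Nat.cast_sub (Nat.one_le_of_lt i₀.pos)]
  have hsum : ∑ i ∈ s, hH.eigenvalues i = A.trace := by
    rw [sum_erase _ hi₀, hH.trace_eq_sum_eigenvalues]
    simp
  have hsq : ∑ i ∈ s, hH.eigenvalues i ^ 2 = a * ∑ i ∈ s, hH.eigenvalues i := by
    rw [sum_erase _ (by simp [hi₀]), hsum, ← htr, hH.trace_mul_self]
    simp
  have hmem {i : Fin n} (hi : i ≠ i₀) : i ∈ s := mem_erase.mpr ⟨hi, mem_univ i⟩
  refine ⟨hsum ▸ s.sum_nonneg_of_sum_sq_eq hsq ha,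
    hcard ▸ hsum ▸ s.sum_le_card_mul_of_sum_sq_eq hsq ha, fun h0 ↦ ?_, fun heq ↦ ?_⟩
  · refine hH.eigenvalues_eq_zero_iff.mp (funext fun i ↦ ?_)
    rcases eq_or_ne i i₀ with rfl | hi
    · exact hi₀
    · exact s.eq_zero_of_sum_eq_zero_of_sum_sq_eq hsq (hsum ▸ h0) i (hmem hi)
  · have hLa {i : Fin n} (hi : i ≠ i₀) : hH.eigenvalues i = a :=
      s.eq_of_sum_eq_card_mul_of_sum_sq_eq hsq (by rw [hsum, hcard, heq]) i (hmem hi)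
    refine ⟨hH.mul_self_eq_smul fun i ↦ (eq_or_ne i i₀).imp (fun hi : i = i₀ ↦ hi ▸ hi₀) hLa, ?_⟩
    rw [hH.rank_eq_card_sub_one hi₀ fun i hi ↦ hLa hi ▸ ha.ne', Fintype.card_fin]

theorem stmt_3 {n : ℕ} (hn : 2 ≤ n) (A : Matrix (Fin n) (Fin n) ℝ)
    (hA : A.IsSymm) (v : Fin n → ℝ) (hv : v ≠ 0) (hAv : A.mulVec v = 0)
    (a : ℝ) (ha : 0 < a) (htr : (A * A).trace = a * A.trace) :
    0 ≤ A.trace ∧ A.trace ≤ ((n : ℝ) - 1) * a ∧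
    (A.trace = 0 → A = 0) ∧
    (A.trace = ((n : ℝ) - 1) * a → A * A = a • A ∧ A.rank = n - 1) :=
  stmt_3_general A hA v hv hAv a ha htr
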